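/- arXiv:0902.3448 — 3 statements merged into one kernel-verified Lean document; each statement's English description precedes it below -/
import Mathlib

section
/- Every tensor (of a fixed rank R over the mixed single/pair index set) that is invariant under the natural action of the symmetric group S_N on particle labels is a linear combination of the binary invariants B(𝒢) over unlabeled graphs 𝒢, provided N is large enough that all entries with graphs isomorphic to a given 𝒢 form a single S_N-orbit. -/
/-- An index: a single particle label (loop) or an unordered pair of distinct labels. -/
abbrev Idx (N : ℕ) := Fin N ⊕ {p : Sym2 (Fin N) // ¬ p.IsDiag}

/-- The edge associated to an index. -/
def edgeOf {N : ℕ} : Idx N → Sym2 (Fin N)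
  | Sum.inl i => s(i, i)
  | Sum.inr p => p.1

/-- Labels (vertices) occurring in an index tuple. -/
def labels {N R : ℕ} (t : Fin R → Idx N) : Set (Fin N) :=
  {v | ∃ k, v ∈ edgeOf (t k)}

/-- Isomorphism of the labeled multigraphs of two index tuples. -/
def GraphIso {N R : ℕ} (t t' : Fin R → Idx N) : Prop :=
  ∃ f : Fin N → Fin N, Set.InjOn f (labels t) ∧
    ∀ k, Sym2.map f (edgeOf (t k)) = edgeOf (t' k)

/-- The action of a permutation of particle labels on an index. -/
def permIdx {N : ℕ} (σ : Equiv.Perm (Fin N)) : Idx N → Idx N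
  | Sum.inl i => Sum.inl (σ i)
  | Sum.inr p => Sum.inr ⟨Sym2.map σ p.1, fun h => p.2 ((Sym2.isDiag_map σ.injective).mp h)⟩

/-- The natural action of `S_N` on index tuples. -/
def permAction {N R : ℕ} (σ : Equiv.Perm (Fin N)) (t : Fin R → Idx N) : Fin R → Idx N :=
  fun k => permIdx σ (t k)

open Classical in
/-- The binary invariant of the graph represented by the tuple `t₀`. -/
noncomputable def Binv {N R : ℕ} (t₀ : Fin R → Idx N) : (Fin R → Idx N) → ℝ :=
  fun t => if GraphIso t₀ t then 1 else 0

/-! Under the orbit hypothesis, graph isomorphism is exactly the orbit relation of `S_N`, so it is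
an equivalence relation whose classes are the orbits. An invariant tensor is then constant on these
classes, and summing its values times the class indicators `Binv` over one representative per class
recovers it. -/

theorem mem_span_range_indicator_of_equivalence {α R : Type*} [Fintype α] [Semiring R]
    {r : α → α → Prop} [DecidableRel r] (hr : Equivalence r)
    (f : α → R) (hf : ∀ a b, r a b → f a = f b) :
    f ∈ Submodule.span R (Set.range fun a b => if r a b then (1 : R) else 0) := by
  let s : Setoid α := ⟨r, hr⟩
  have hdecomp : f = ∑ q : Quotient s, f q.out • fun b => if r q.out b then (1 : R) else 0 := by
    funext b
    have hclass : ∀ q : Quotient s, r q.out b ↔ q = ⟦b⟧ := fun q => by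
      conv_rhs => rw [← Quotient.out_eq q]
      exact (@Quotient.eq _ s _ _).symm
    rw [Finset.sum_apply, Fintype.sum_eq_single ⟦b⟧]
    · rw [Pi.smul_apply, if_pos ((hclass _).2 rfl), smul_eq_mul, mul_one]
      exact (hf _ _ (Quotient.mk_out (s := s) b)).symm
    · intro q hq
      rw [Pi.smul_apply, if_neg (mt (hclass q).1 hq), smul_zero]
  rw [hdecomp]
  exact Submodule.sum_mem _ fun q _ => Submodule.smul_mem _ _ (Submodule.subset_span ⟨q.out, rfl⟩)

lemma edgeOf_permIdx {N : ℕ} (σ : Equiv.Perm (Fin N)) (x : Idx N) :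
    edgeOf (permIdx σ x) = Sym2.map σ (edgeOf x) := by
  cases x <;> simp [edgeOf, permIdx]

lemma permAction_inv_permAction {N R : ℕ} (σ : Equiv.Perm (Fin N)) (t : Fin R → Idx N) :
    permAction σ⁻¹ (permAction σ t) = t := by
  funext k
  cases ht : t k <;> simp [permAction, permIdx, ht, Sym2.map_map]

lemma graphIso_refl {N R : ℕ} (t : Fin R → Idx N) : GraphIso t t :=
  ⟨id, Set.injOn_id _, fun k => by simp⟩

lemma graphIso_permAction_iff {N R : ℕ} (σ : Equiv.Perm (Fin N)) (s t : Fin R → Idx N) :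
    GraphIso s (permAction σ t) ↔ GraphIso s t := by
  constructor
  · rintro ⟨f, hf, he⟩
    refine ⟨σ.symm ∘ f, fun x hx y hy h => hf hx hy (σ.symm.injective h), fun k => ?_⟩
    rw [← Sym2.map_map, he k, permAction, edgeOf_permIdx, Sym2.map_map]
    simp
  · rintro ⟨f, hf, he⟩
    refine ⟨σ ∘ f, fun x hx y hy h => hf hx hy (σ.injective h), fun k => ?_⟩
    rw [permAction, edgeOf_permIdx, ← he k, Sym2.map_map]

lemma graphIso_equivalence {N R : ℕ}
    (horbit : ∀ t t' : Fin R → Idx N, GraphIso t t' →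
      ∃ σ : Equiv.Perm (Fin N), permAction σ t = t') :
    Equivalence (GraphIso (N := N) (R := R)) where
  refl := graphIso_refl
  symm {t t'} h := by
    obtain ⟨σ, rfl⟩ := horbit t t' h
    have := (graphIso_permAction_iff σ⁻¹ _ _).2 (graphIso_refl (permAction σ t))
    rwa [permAction_inv_permAction] at this
  trans {t t' t''} h h' := by
    obtain ⟨σ, rfl⟩ := horbit t' t'' h'
    rwa [graphIso_permAction_iff]

/-- Every `S_N`-invariant tensor of rank `R` is a linear combination (span member) of
the binary invariants, provided `N` is large enough that any two index tuples with
isomorphic graphs lie in a single `S_N`-orbit. -/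
theorem invariant_tensor_in_span_of_binary_invariants (N R : ℕ)
    (horbit : ∀ t t' : Fin R → Idx N, GraphIso t t' →
      ∃ σ : Equiv.Perm (Fin N), permAction σ t = t')
    (T : (Fin R → Idx N) → ℝ)
    (hT : ∀ (σ : Equiv.Perm (Fin N)) (t : Fin R → Idx N), T (permAction σ t) = T t) :
    T ∈ Submodule.span ℝ (Set.range (Binv (N := N) (R := R))) := by
  classical
  have hconst : ∀ t t', GraphIso t t' → T t = T t' := fun t t' h => by
    obtain ⟨σ, rfl⟩ := horbit t t' h
    exact (hT σ t).symm
  exact mem_span_range_indicator_of_equivalence (graphIso_equivalence horbit) T hconst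
end

section
/- For the matrix M(γ) with 1 on the diagonal and γ off-diagonal, the second partial derivatives of det M with respect to the off-diagonal variables satisfy, at the symmetric point: ∂²det/∂γ_{ij}∂γ_{kl} = 0 for i,j,k,l distinct, ∂²det/∂γ_{ij}∂γ_{jk} = 2γ(1−γ)^{N−3} for distinct i,j,k, and ∂²det/∂γ_{ij}² = −2(1+(N−3)γ)(1−γ)^{N−3}. -/
open Matrix Finset

set_option linter.unreachableTactic false
set_option linter.unusedTactic false

/-- The `N×N` matrix with unit diagonal in which the off-diagonal variable pair
`{i,j}` carries the value `x`, the pair `{k,l}` carries the value `y`, and all other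
off-diagonal entries equal `γ`. -/
def gramTwoVar {N : ℕ} (i j k l : Fin N) (γ x y : ℝ) : Matrix (Fin N) (Fin N) ℝ :=
  Matrix.of fun a b =>
    if a = b then (1 : ℝ)
    else if (a = i ∧ b = j) ∨ (a = j ∧ b = i) then x
    else if (a = k ∧ b = l) ∨ (a = l ∧ b = k) then y
    else γ

lemma master {n m : Type*} [Fintype n] [Fintype m] [DecidableEq n] [DecidableEq m]
    (hmn : Fintype.card m ≤ Fintype.card n)
    (A : Matrix n m ℝ) (B : Matrix m n ℝ) (c : ℝ) :
    (c • (1 : Matrix n n ℝ) + A * B).det =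
      c ^ (Fintype.card n - Fintype.card m) * (c • (1 : Matrix m m ℝ) + B * A).det := by
  have key : ∀ d : ℝ, d ≠ 0 →
      (d • (1 : Matrix n n ℝ) + A * B).det =
        d ^ (Fintype.card n - Fintype.card m) * (d • (1 : Matrix m m ℝ) + B * A).det := by
    intro d hd
    have h1 : d • (1 : Matrix n n ℝ) + A * B = d • (1 + A * (d⁻¹ • B)) := by
      rw [smul_add, Matrix.mul_smul, smul_smul, mul_inv_cancel₀ hd, one_smul]
    have h2 : d • (1 : Matrix m m ℝ) + B * A = d • (1 + (d⁻¹ • B) * A) := by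
      rw [smul_add, Matrix.smul_mul, smul_smul, mul_inv_cancel₀ hd, one_smul]
    rw [h1, h2, Matrix.det_smul, Matrix.det_smul, Matrix.det_one_add_mul_comm,
      ← mul_assoc, ← pow_add, Nat.sub_add_cancel hmn]
  have hF : Continuous fun d : ℝ => (d • (1 : Matrix n n ℝ) + A * B).det :=
    Continuous.matrix_det ((continuous_id.smul continuous_const).add continuous_const)
  have hG : Continuous fun d : ℝ =>
      d ^ (Fintype.card n - Fintype.card m) * (d • (1 : Matrix m m ℝ) + B * A).det :=
    (continuous_pow _).mul
      (Continuous.matrix_det ((continuous_id.smul continuous_const).add continuous_const))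
  have := Continuous.ext_on (dense_compl_singleton (0 : ℝ)) hF hG
    (fun d hd => key d (Set.mem_compl_singleton_iff.mp hd))
  exact congrFun this c

lemma sum_single_mul {N : ℕ} (i : Fin N) (u : ℝ) (f : Fin N → ℝ) :
    ∑ a : Fin N, (if a = i then u else 0) * f a = u * f i := by
  rw [Finset.sum_eq_single i]
  · simp
  · intro b _ hb; simp [hb]
  · simp

lemma sum_const_mul_one {N : ℕ} (u : ℝ) :
    ∑ _a : Fin N, u * (1 : ℝ) = N * u := by
  simp [Finset.sum_const, mul_comm]

lemma sum_const_mul_single {N : ℕ} (i : Fin N) (u v : ℝ) :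
    ∑ a : Fin N, u * (if a = i then v else 0) = u * v := by
  rw [Finset.sum_eq_single i]
  · simp
  · intro b _ hb; simp [hb]
  · simp

lemma det_fin_four' (A : Matrix (Fin 4) (Fin 4) ℝ) :
    A.det =
      A 0 0 * (A.submatrix Fin.succ (Fin.succAbove 0)).det
      - A 0 1 * (A.submatrix Fin.succ (Fin.succAbove 1)).det
      + A 0 2 * (A.submatrix Fin.succ (Fin.succAbove 2)).det
      - A 0 3 * (A.submatrix Fin.succ (Fin.succAbove 3)).det := by
  rw [Matrix.det_succ_row_zero, Fin.sum_univ_four]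
  norm_num [show ((3:Fin 4):ℕ) = 3 from rfl]
  ring

lemma det_fin_five' (A : Matrix (Fin 5) (Fin 5) ℝ) :
    A.det =
      A 0 0 * (A.submatrix Fin.succ (Fin.succAbove 0)).det
      - A 0 1 * (A.submatrix Fin.succ (Fin.succAbove 1)).det
      + A 0 2 * (A.submatrix Fin.succ (Fin.succAbove 2)).det
      - A 0 3 * (A.submatrix Fin.succ (Fin.succAbove 3)).det
      + A 0 4 * (A.submatrix Fin.succ (Fin.succAbove 4)).det := by
  rw [Matrix.det_succ_row_zero, Fin.sum_univ_five]
  norm_num [show ((3:Fin 5):ℕ) = 3 from rfl, show ((4:Fin 5):ℕ) = 4 from rfl]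
  ring

set_option maxHeartbeats 1000000 in
lemma det_fin_four_of (a00 a01 a02 a03 a10 a11 a12 a13 a20 a21 a22 a23 a30 a31 a32 a33 : ℝ) :
    (!![a00,a01,a02,a03;a10,a11,a12,a13;a20,a21,a22,a23;a30,a31,a32,a33] : Matrix (Fin 4) (Fin 4) ℝ).det = a00*a11*a22*a33 - a00*a11*a23*a32 - a00*a12*a21*a33 + a00*a12*a23*a31 + a00*a13*a21*a32 - a00*a13*a22*a31 - a01*a10*a22*a33 + a01*a10*a23*a32 + a01*a12*a20*a33 - a01*a12*a23*a30 - a01*a13*a20*a32 + a01*a13*a22*a30 + a02*a10*a21*a33 - a02*a10*a23*a31 - a02*a11*a20*a33 + a02*a11*a23*a30 + a02*a13*a20*a31 - a02*a13*a21*a30 - a03*a10*a21*a32 + a03*a10*a22*a31 + a03*a11*a20*a32 - a03*a11*a22*a30 - a03*a12*a20*a31 + a03*a12*a21*a30 := by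
  have m0 : (!![a00,a01,a02,a03;a10,a11,a12,a13;a20,a21,a22,a23;a30,a31,a32,a33] : Matrix (Fin 4) (Fin 4) ℝ).submatrix Fin.succ (Fin.succAbove 0) = !![a11,a12,a13;a21,a22,a23;a31,a32,a33] := by
    ext a b; fin_cases a <;> fin_cases b <;> rfl
  have m1 : (!![a00,a01,a02,a03;a10,a11,a12,a13;a20,a21,a22,a23;a30,a31,a32,a33] : Matrix (Fin 4) (Fin 4) ℝ).submatrix Fin.succ (Fin.succAbove 1) = !![a10,a12,a13;a20,a22,a23;a30,a32,a33] := by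
    ext a b; fin_cases a <;> fin_cases b <;> rfl
  have m2 : (!![a00,a01,a02,a03;a10,a11,a12,a13;a20,a21,a22,a23;a30,a31,a32,a33] : Matrix (Fin 4) (Fin 4) ℝ).submatrix Fin.succ (Fin.succAbove 2) = !![a10,a11,a13;a20,a21,a23;a30,a31,a33] := by
    ext a b; fin_cases a <;> fin_cases b <;> rfl
  have m3 : (!![a00,a01,a02,a03;a10,a11,a12,a13;a20,a21,a22,a23;a30,a31,a32,a33] : Matrix (Fin 4) (Fin 4) ℝ).submatrix Fin.succ (Fin.succAbove 3) = !![a10,a11,a12;a20,a21,a22;a30,a31,a32] := by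
    ext a b; fin_cases a <;> fin_cases b <;> rfl
  rw [det_fin_four', m0, m1, m2, m3]
  simp [Matrix.det_fin_three]
  ring

set_option maxHeartbeats 4000000 in
lemma det_fin_five_of (b00 b01 b02 b03 b04 b10 b11 b12 b13 b14 b20 b21 b22 b23 b24 b30 b31 b32 b33 b34 b40 b41 b42 b43 b44 : ℝ) :
    (!![b00,b01,b02,b03,b04;b10,b11,b12,b13,b14;b20,b21,b22,b23,b24;b30,b31,b32,b33,b34;b40,b41,b42,b43,b44] : Matrix (Fin 5) (Fin 5) ℝ).det = b00*b11*b22*b33*b44 - b00*b11*b22*b34*b43 - b00*b11*b23*b32*b44 + b00*b11*b23*b34*b42 + b00*b11*b24*b32*b43 - b00*b11*b24*b33*b42 - b00*b12*b21*b33*b44 + b00*b12*b21*b34*b43 + b00*b12*b23*b31*b44 - b00*b12*b23*b34*b41 - b00*b12*b24*b31*b43 + b00*b12*b24*b33*b41 + b00*b13*b21*b32*b44 - b00*b13*b21*b34*b42 - b00*b13*b22*b31*b44 + b00*b13*b22*b34*b41 + b00*b13*b24*b31*b42 - b00*b13*b24*b32*b41 - b00*b14*b21*b32*b43 + b00*b14*b21*b33*b42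 + b00*b14*b22*b31*b43 - b00*b14*b22*b33*b41 - b00*b14*b23*b31*b42 + b00*b14*b23*b32*b41 - b01*b10*b22*b33*b44 + b01*b10*b22*b34*b43 + b01*b10*b23*b32*b44 - b01*b10*b23*b34*b42 - b01*b10*b24*b32*b43 + b01*b10*b24*b33*b42 + b01*b12*b20*b33*b44 - b01*b12*b20*b34*b43 - b01*b12*b23*b30*b44 + b01*b12*b23*b34*b40 + b01*b12*b24*b30*b43 - b01*b12*b24*b33*b40 - b01*b13*b20*b32*b44 + b01*b13*b20*b34*b42 + b01*b13*b22*b30*b44 - b01*b13*b22*b34*b40 - b01*b13*b24*b30*b42 + b01*b13*b24*b32*b40 + b01*b14*b20*b32*b43 - b01*b14*b20*b33*b42 - b01*b14*b22*b30*b43 + b01*b14*b22*b33*b40 + b01*b14*b23*b30*b42 - b01*b14*b23*b32*b40 + b02*b10*b21*b33*b44 - b02*b10*b21*b34*b43 - b02*b10*b23*b31*b44 + b02*b10*b23*b34*b41 + b02*b10*b24*b31*b43 - b02*b10*b24*b33*b41 - b02*b11*b20*b33*b44 + b02*b11*b20*b34*b43 + b02*b11*b23*b30*b44 - b02*b11*b23*b34*b40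 - b02*b11*b24*b30*b43 + b02*b11*b24*b33*b40 + b02*b13*b20*b31*b44 - b02*b13*b20*b34*b41 - b02*b13*b21*b30*b44 + b02*b13*b21*b34*b40 + b02*b13*b24*b30*b41 - b02*b13*b24*b31*b40 - b02*b14*b20*b31*b43 + b02*b14*b20*b33*b41 + b02*b14*b21*b30*b43 - b02*b14*b21*b33*b40 - b02*b14*b23*b30*b41 + b02*b14*b23*b31*b40 - b03*b10*b21*b32*b44 + b03*b10*b21*b34*b42 + b03*b10*b22*b31*b44 - b03*b10*b22*b34*b41 - b03*b10*b24*b31*b42 + b03*b10*b24*b32*b41 + b03*b11*b20*b32*b44 - b03*b11*b20*b34*b42 - b03*b11*b22*b30*b44 + b03*b11*b22*b34*b40 + b03*b11*b24*b30*b42 - b03*b11*b24*b32*b40 - b03*b12*b20*b31*b44 + b03*b12*b20*b34*b41 + b03*b12*b21*b30*b44 - b03*b12*b21*b34*b40 - b03*b12*b24*b30*b41 + b03*b12*b24*b31*b40 + b03*b14*b20*b31*b42 - b03*b14*b20*b32*b41 - b03*b14*b21*b30*b42 + b03*b14*b21*b32*b40 + b03*b14*b22*b30*b41 - b03*b14*b22*b31*b40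 + b04*b10*b21*b32*b43 - b04*b10*b21*b33*b42 - b04*b10*b22*b31*b43 + b04*b10*b22*b33*b41 + b04*b10*b23*b31*b42 - b04*b10*b23*b32*b41 - b04*b11*b20*b32*b43 + b04*b11*b20*b33*b42 + b04*b11*b22*b30*b43 - b04*b11*b22*b33*b40 - b04*b11*b23*b30*b42 + b04*b11*b23*b32*b40 + b04*b12*b20*b31*b43 - b04*b12*b20*b33*b41 - b04*b12*b21*b30*b43 + b04*b12*b21*b33*b40 + b04*b12*b23*b30*b41 - b04*b12*b23*b31*b40 - b04*b13*b20*b31*b42 + b04*b13*b20*b32*b41 + b04*b13*b21*b30*b42 - b04*b13*b21*b32*b40 - b04*b13*b22*b30*b41 + b04*b13*b22*b31*b40 := by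
  have m0 : (!![b00,b01,b02,b03,b04;b10,b11,b12,b13,b14;b20,b21,b22,b23,b24;b30,b31,b32,b33,b34;b40,b41,b42,b43,b44] : Matrix (Fin 5) (Fin 5) ℝ).submatrix Fin.succ (Fin.succAbove 0) = !![b11,b12,b13,b14;b21,b22,b23,b24;b31,b32,b33,b34;b41,b42,b43,b44] := by
    ext a b; fin_cases a <;> fin_cases b <;> rfl
  have m1 : (!![b00,b01,b02,b03,b04;b10,b11,b12,b13,b14;b20,b21,b22,b23,b24;b30,b31,b32,b33,b34;b40,b41,b42,b43,b44] : Matrix (Fin 5) (Fin 5) ℝ).submatrix Fin.succ (Fin.succAbove 1) = !![b10,b12,b13,b14;b20,b22,b23,b24;b30,b32,b33,b34;b40,b42,b43,b44] := by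
    ext a b; fin_cases a <;> fin_cases b <;> rfl
  have m2 : (!![b00,b01,b02,b03,b04;b10,b11,b12,b13,b14;b20,b21,b22,b23,b24;b30,b31,b32,b33,b34;b40,b41,b42,b43,b44] : Matrix (Fin 5) (Fin 5) ℝ).submatrix Fin.succ (Fin.succAbove 2) = !![b10,b11,b13,b14;b20,b21,b23,b24;b30,b31,b33,b34;b40,b41,b43,b44] := by
    ext a b; fin_cases a <;> fin_cases b <;> rfl
  have m3 : (!![b00,b01,b02,b03,b04;b10,b11,b12,b13,b14;b20,b21,b22,b23,b24;b30,b31,b32,b33,b34;b40,b41,b42,b43,b44] : Matrix (Fin 5) (Fin 5) ℝ).submatrix Fin.succ (Fin.succAbove 3) = !![b10,b11,b12,b14;b20,b21,b22,b24;b30,b31,b32,b34;b40,b41,b42,b44] := by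
    ext a b; fin_cases a <;> fin_cases b <;> rfl
  have m4 : (!![b00,b01,b02,b03,b04;b10,b11,b12,b13,b14;b20,b21,b22,b23,b24;b30,b31,b32,b33,b34;b40,b41,b42,b43,b44] : Matrix (Fin 5) (Fin 5) ℝ).submatrix Fin.succ (Fin.succAbove 4) = !![b10,b11,b12,b13;b20,b21,b22,b23;b30,b31,b32,b33;b40,b41,b42,b43] := by
    ext a b; fin_cases a <;> fin_cases b <;> rfl
  rw [det_fin_five', m0, m1, m2, m3, m4, det_fin_four_of, det_fin_four_of, det_fin_four_of,
    det_fin_four_of, det_fin_four_of]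
  simp
  ring


lemma det_fin_five_expanded (A : Matrix (Fin 5) (Fin 5) ℝ) :
    A.det = A 0 0 * A 1 1 * A 2 2 * A 3 3 * A 4 4 - A 0 0 * A 1 1 * A 2 2 * A 3 4 * A 4 3 - A 0 0 * A 1 1 * A 2 3 * A 3 2 * A 4 4 + A 0 0 * A 1 1 * A 2 3 * A 3 4 * A 4 2 + A 0 0 * A 1 1 * A 2 4 * A 3 2 * A 4 3 - A 0 0 * A 1 1 * A 2 4 * A 3 3 * A 4 2 - A 0 0 * A 1 2 * A 2 1 * A 3 3 * A 4 4 + A 0 0 * A 1 2 * A 2 1 * A 3 4 * A 4 3 + A 0 0 * A 1 2 * A 2 3 * A 3 1 * A 4 4 - A 0 0 * A 1 2 * A 2 3 * A 3 4 * A 4 1 - A 0 0 * A 1 2 * A 2 4 * A 3 1 * A 4 3 + A 0 0 * A 1 2 * A 2 4 * A 3 3 * A 4 1 + A 0 0 * A 1 3 * A 2 1 * A 3 2 * A 4 4 - A 0 0 * A 1 3 * A 2 1 * A 3 4 * A 4 2 - A 0 0 * A 1 3 * A 2 2 * A 3 1 * A 4 4 + A 0 0 * A 1 3 * A 2 2 *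 A 3 4 * A 4 1 + A 0 0 * A 1 3 * A 2 4 * A 3 1 * A 4 2 - A 0 0 * A 1 3 * A 2 4 * A 3 2 * A 4 1 - A 0 0 * A 1 4 * A 2 1 * A 3 2 * A 4 3 + A 0 0 * A 1 4 * A 2 1 * A 3 3 * A 4 2 + A 0 0 * A 1 4 * A 2 2 * A 3 1 * A 4 3 - A 0 0 * A 1 4 * A 2 2 * A 3 3 * A 4 1 - A 0 0 * A 1 4 * A 2 3 * A 3 1 * A 4 2 + A 0 0 * A 1 4 * A 2 3 * A 3 2 * A 4 1 - A 0 1 * A 1 0 * A 2 2 * A 3 3 * A 4 4 + A 0 1 * A 1 0 * A 2 2 * A 3 4 * A 4 3 + A 0 1 * A 1 0 * A 2 3 * A 3 2 * A 4 4 - A 0 1 * A 1 0 * A 2 3 * A 3 4 * A 4 2 - A 0 1 * A 1 0 * A 2 4 * A 3 2 * A 4 3 + A 0 1 * A 1 0 * A 2 4 * A 3 3 * A 4 2 + A 0 1 * A 1 2 * A 2 0 * A 3 3 * A 4 4 - A 0 1 * A 1 2 * A 2 0 * A 3 4 * A 4 3 - A 0 1 * A 1 2 * A 2 3 * A 3 0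 * A 4 4 + A 0 1 * A 1 2 * A 2 3 * A 3 4 * A 4 0 + A 0 1 * A 1 2 * A 2 4 * A 3 0 * A 4 3 - A 0 1 * A 1 2 * A 2 4 * A 3 3 * A 4 0 - A 0 1 * A 1 3 * A 2 0 * A 3 2 * A 4 4 + A 0 1 * A 1 3 * A 2 0 * A 3 4 * A 4 2 + A 0 1 * A 1 3 * A 2 2 * A 3 0 * A 4 4 - A 0 1 * A 1 3 * A 2 2 * A 3 4 * A 4 0 - A 0 1 * A 1 3 * A 2 4 * A 3 0 * A 4 2 + A 0 1 * A 1 3 * A 2 4 * A 3 2 * A 4 0 + A 0 1 * A 1 4 * A 2 0 * A 3 2 * A 4 3 - A 0 1 * A 1 4 * A 2 0 * A 3 3 * A 4 2 - A 0 1 * A 1 4 * A 2 2 * A 3 0 * A 4 3 + A 0 1 * A 1 4 * A 2 2 * A 3 3 * A 4 0 + A 0 1 * A 1 4 * A 2 3 * A 3 0 * A 4 2 - A 0 1 * A 1 4 * A 2 3 * A 3 2 * A 4 0 + A 0 2 * A 1 0 * A 2 1 * A 3 3 * A 4 4 - A 0 2 * A 1 0 * A 2 1 * A 3 4 * A 4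 3 - A 0 2 * A 1 0 * A 2 3 * A 3 1 * A 4 4 + A 0 2 * A 1 0 * A 2 3 * A 3 4 * A 4 1 + A 0 2 * A 1 0 * A 2 4 * A 3 1 * A 4 3 - A 0 2 * A 1 0 * A 2 4 * A 3 3 * A 4 1 - A 0 2 * A 1 1 * A 2 0 * A 3 3 * A 4 4 + A 0 2 * A 1 1 * A 2 0 * A 3 4 * A 4 3 + A 0 2 * A 1 1 * A 2 3 * A 3 0 * A 4 4 - A 0 2 * A 1 1 * A 2 3 * A 3 4 * A 4 0 - A 0 2 * A 1 1 * A 2 4 * A 3 0 * A 4 3 + A 0 2 * A 1 1 * A 2 4 * A 3 3 * A 4 0 + A 0 2 * A 1 3 * A 2 0 * A 3 1 * A 4 4 - A 0 2 * A 1 3 * A 2 0 * A 3 4 * A 4 1 - A 0 2 * A 1 3 * A 2 1 * A 3 0 * A 4 4 + A 0 2 * A 1 3 * A 2 1 * A 3 4 * A 4 0 + A 0 2 * A 1 3 * A 2 4 * A 3 0 * A 4 1 - A 0 2 * A 1 3 * A 2 4 * A 3 1 * A 4 0 - A 0 2 * A 1 4 * A 2 0 * A 3 1 * A 4 3 + A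 0 2 * A 1 4 * A 2 0 * A 3 3 * A 4 1 + A 0 2 * A 1 4 * A 2 1 * A 3 0 * A 4 3 - A 0 2 * A 1 4 * A 2 1 * A 3 3 * A 4 0 - A 0 2 * A 1 4 * A 2 3 * A 3 0 * A 4 1 + A 0 2 * A 1 4 * A 2 3 * A 3 1 * A 4 0 - A 0 3 * A 1 0 * A 2 1 * A 3 2 * A 4 4 + A 0 3 * A 1 0 * A 2 1 * A 3 4 * A 4 2 + A 0 3 * A 1 0 * A 2 2 * A 3 1 * A 4 4 - A 0 3 * A 1 0 * A 2 2 * A 3 4 * A 4 1 - A 0 3 * A 1 0 * A 2 4 * A 3 1 * A 4 2 + A 0 3 * A 1 0 * A 2 4 * A 3 2 * A 4 1 + A 0 3 * A 1 1 * A 2 0 * A 3 2 * A 4 4 - A 0 3 * A 1 1 * A 2 0 * A 3 4 * A 4 2 - A 0 3 * A 1 1 * A 2 2 * A 3 0 * A 4 4 + A 0 3 * A 1 1 * A 2 2 * A 3 4 * A 4 0 + A 0 3 * A 1 1 * A 2 4 * A 3 0 * A 4 2 - A 0 3 * A 1 1 * A 2 4 * A 3 2 * A 4 0 - A 0 3 *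 A 1 2 * A 2 0 * A 3 1 * A 4 4 + A 0 3 * A 1 2 * A 2 0 * A 3 4 * A 4 1 + A 0 3 * A 1 2 * A 2 1 * A 3 0 * A 4 4 - A 0 3 * A 1 2 * A 2 1 * A 3 4 * A 4 0 - A 0 3 * A 1 2 * A 2 4 * A 3 0 * A 4 1 + A 0 3 * A 1 2 * A 2 4 * A 3 1 * A 4 0 + A 0 3 * A 1 4 * A 2 0 * A 3 1 * A 4 2 - A 0 3 * A 1 4 * A 2 0 * A 3 2 * A 4 1 - A 0 3 * A 1 4 * A 2 1 * A 3 0 * A 4 2 + A 0 3 * A 1 4 * A 2 1 * A 3 2 * A 4 0 + A 0 3 * A 1 4 * A 2 2 * A 3 0 * A 4 1 - A 0 3 * A 1 4 * A 2 2 * A 3 1 * A 4 0 + A 0 4 * A 1 0 * A 2 1 * A 3 2 * A 4 3 - A 0 4 * A 1 0 * A 2 1 * A 3 3 * A 4 2 - A 0 4 * A 1 0 * A 2 2 * A 3 1 * A 4 3 + A 0 4 * A 1 0 * A 2 2 * A 3 3 * A 4 1 + A 0 4 * A 1 0 * A 2 3 * A 3 1 * A 4 2 - A 0 4 * A 1 0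 * A 2 3 * A 3 2 * A 4 1 - A 0 4 * A 1 1 * A 2 0 * A 3 2 * A 4 3 + A 0 4 * A 1 1 * A 2 0 * A 3 3 * A 4 2 + A 0 4 * A 1 1 * A 2 2 * A 3 0 * A 4 3 - A 0 4 * A 1 1 * A 2 2 * A 3 3 * A 4 0 - A 0 4 * A 1 1 * A 2 3 * A 3 0 * A 4 2 + A 0 4 * A 1 1 * A 2 3 * A 3 2 * A 4 0 + A 0 4 * A 1 2 * A 2 0 * A 3 1 * A 4 3 - A 0 4 * A 1 2 * A 2 0 * A 3 3 * A 4 1 - A 0 4 * A 1 2 * A 2 1 * A 3 0 * A 4 3 + A 0 4 * A 1 2 * A 2 1 * A 3 3 * A 4 0 + A 0 4 * A 1 2 * A 2 3 * A 3 0 * A 4 1 - A 0 4 * A 1 2 * A 2 3 * A 3 1 * A 4 0 - A 0 4 * A 1 3 * A 2 0 * A 3 1 * A 4 2 + A 0 4 * A 1 3 * A 2 0 * A 3 2 * A 4 1 + A 0 4 * A 1 3 * A 2 1 * A 3 0 * A 4 2 - A 0 4 * A 1 3 * A 2 1 * A 3 2 * A 4 0 - A 0 4 * A 1 3 * A 2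 2 * A 3 0 * A 4 1 + A 0 4 * A 1 3 * A 2 2 * A 3 1 * A 4 0 := by
  have h : A = !![A 0 0,A 0 1,A 0 2,A 0 3,A 0 4;A 1 0,A 1 1,A 1 2,A 1 3,A 1 4;A 2 0,A 2 1,A 2 2,A 2 3,A 2 4;A 3 0,A 3 1,A 3 2,A 3 3,A 3 4;A 4 0,A 4 1,A 4 2,A 4 3,A 4 4] := by
    ext a b; fin_cases a <;> fin_cases b <;> rfl
  conv_lhs => rw [h]
  rw [det_fin_five_of]

lemma det_case3 {N : ℕ} (hN : 3 ≤ N) (i j : Fin N) (hij : i ≠ j) (γ x : ℝ) :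
    (Matrix.of fun a b : Fin N =>
        if a = b then (1 : ℝ)
        else if (a = i ∧ b = j) ∨ (a = j ∧ b = i) then x
        else γ).det =
    (1 - γ) ^ (N - 3) * (((1 - γ) + γ * N) * (1 - γ) ^ 2
      + (-2 * γ * (1 - γ)) * (x - γ)
      + (2 * γ - (1 - γ) - γ * N) * (x - γ) ^ 2) := by
  set c : ℝ := 1 - γ with hc
  set s : ℝ := x - γ with hs
  set A : Matrix (Fin N) (Fin 3) ℝ :=
    Matrix.of fun a f => ![(1 : ℝ), if a = i then 1 else 0, if a = j then 1 else 0] f with hA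
  set B : Matrix (Fin 3) (Fin N) ℝ :=
    Matrix.of ![(fun _ => γ), (fun b => if b = j then s else 0),
      (fun b => if b = i then s else 0)] with hB
  have hM : (Matrix.of fun a b : Fin N =>
        if a = b then (1 : ℝ)
        else if (a = i ∧ b = j) ∨ (a = j ∧ b = i) then x
        else γ) = c • (1 : Matrix (Fin N) (Fin N) ℝ) + A * B := by
    ext a b
    simp only [Matrix.of_apply, Matrix.add_apply, Matrix.smul_apply, Matrix.one_apply,
      Matrix.mul_apply, Fin.sum_univ_three, hA, hB, Matrix.cons_val_zero, Matrix.cons_val_one,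
      Matrix.head_cons, Matrix.cons_val_two, Matrix.tail_cons, smul_eq_mul]
    split_ifs <;> simp_all <;> ring
  rw [hM, master (by simp [Fintype.card_fin]; omega) A B c]
  simp only [Fintype.card_fin]
  congr 1
  rw [Matrix.det_fin_three]
  simp only [Matrix.add_apply, Matrix.smul_apply, Matrix.one_apply, Matrix.mul_apply, hA, hB,
    Matrix.of_apply, Matrix.cons_val_zero, Matrix.cons_val_one, Matrix.head_cons,
    Matrix.cons_val_two, Matrix.tail_cons, smul_eq_mul,
    sum_single_mul, sum_const_mul_one, sum_const_mul_single]
  simp [hij, Ne.symm hij]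
  ring

lemma det_case2 {N : ℕ} (hN : 3 ≤ N) (i j k : Fin N) (hij : i ≠ j) (hjk : j ≠ k)
    (hik : i ≠ k) (γ x y : ℝ) :
    (gramTwoVar i j j k γ x y).det =
    (1 - γ) ^ (N - 3) * (((1 - γ) + γ * N) * (1 - γ) ^ 2
      + (-2 * γ * (1 - γ)) * ((x - γ) + (y - γ))
      + (γ - (1 - γ) - γ * N) * ((x - γ) ^ 2 + (y - γ) ^ 2)
      + γ * ((x - γ) + (y - γ)) ^ 2) := by
  have hM : gramTwoVar i j j k γ x y = (1 - γ) • (1 : Matrix (Fin N) (Fin N) ℝ) +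
      (Matrix.of fun a f => ![(1 : ℝ),
        (if a = i then x - γ else 0) + (if a = k then y - γ else 0),
        if a = j then 1 else 0] f) *
      (Matrix.of ![(fun _ => γ), (fun b => if b = j then 1 else 0),
        (fun b => (if b = i then x - γ else 0) + (if b = k then y - γ else 0))]) := by
    ext a b
    simp only [gramTwoVar, Matrix.of_apply, Matrix.add_apply, Matrix.smul_apply, Matrix.one_apply,
      Matrix.mul_apply, Fin.sum_univ_three, Matrix.cons_val_zero, Matrix.cons_val_one,
      Matrix.head_cons, Matrix.cons_val_two, Matrix.tail_cons, smul_eq_mul]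
    split_ifs <;> simp_all <;> ring
  rw [hM, master (by simp [Fintype.card_fin]; omega)]
  simp only [Fintype.card_fin]
  congr 1
  rw [Matrix.det_fin_three]
  simp only [Matrix.add_apply, Matrix.smul_apply, Matrix.one_apply, Matrix.mul_apply,
    Matrix.of_apply, Matrix.cons_val_zero, Matrix.cons_val_one, Matrix.head_cons,
    Matrix.cons_val_two, Matrix.tail_cons, smul_eq_mul, mul_add, add_mul,
    Finset.sum_add_distrib, sum_single_mul, sum_const_mul_one, sum_const_mul_single]
  simp [hij, hjk, hik, Ne.symm hij, Ne.symm hjk, Ne.symm hik]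
  ring

set_option maxHeartbeats 2000000 in
lemma det_case1 {N : ℕ} (hN : 5 ≤ N) (i j k l : Fin N) (hij : i ≠ j) (hik : i ≠ k)
    (hil : i ≠ l) (hjk : j ≠ k) (hjl : j ≠ l) (hkl : k ≠ l) (γ x y : ℝ) :
    (gramTwoVar i j k l γ x y).det =
    (1-γ)^(N-5) * ((1-γ)^5 + (1-γ)^4*γ*N - 2*(1-γ)^3*γ*((x-γ)+(y-γ))
      - ((1-γ)^3 + (1-γ)^2*γ*N - 2*(1-γ)^2*γ)*((x-γ)^2+(y-γ)^2)
      + 2*(1-γ)*γ*((x-γ)*(y-γ)^2 + (x-γ)^2*(y-γ))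
      + ((1-γ) + γ*N - 4*γ)*(x-γ)^2*(y-γ)^2) := by
  have hM : gramTwoVar i j k l γ x y = (1 - γ) • (1 : Matrix (Fin N) (Fin N) ℝ) +
      (Matrix.of fun a f => ![(1 : ℝ), if a = i then 1 else 0, if a = j then 1 else 0,
        if a = k then 1 else 0, if a = l then 1 else 0] f) *
      (Matrix.of ![(fun _ => γ), (fun b => if b = j then x - γ else 0),
        (fun b => if b = i then x - γ else 0), (fun b => if b = l then y - γ else 0),
        (fun b => if b = k then y - γ else 0)]) := by
    ext a b
    simp only [gramTwoVar, Matrix.of_apply, Matrix.add_apply, Matrix.smul_apply, Matrix.one_apply,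
      Matrix.mul_apply, Fin.sum_univ_five, Matrix.cons_val_zero, Matrix.cons_val_one,
      Matrix.head_cons, Matrix.cons_val_two, Matrix.tail_cons, Matrix.cons_val_three,
      Matrix.cons_val_four, smul_eq_mul]
    split_ifs <;> simp_all <;> ring
  rw [hM, master (by simp [Fintype.card_fin]; omega)]
  simp only [Fintype.card_fin]
  congr 1
  rw [det_fin_five_expanded]
  simp only [Matrix.add_apply, Matrix.smul_apply, Matrix.one_apply, Matrix.mul_apply,
    Matrix.of_apply, Matrix.cons_val_zero, Matrix.cons_val_one, Matrix.head_cons,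
    Matrix.cons_val_two, Matrix.tail_cons, Matrix.cons_val_three, Matrix.cons_val_four,
    smul_eq_mul, sum_single_mul, sum_const_mul_one, sum_const_mul_single]
  simp [hij, hik, hil, hjk, hjl, hkl, Ne.symm hij, Ne.symm hik, Ne.symm hil,
    Ne.symm hjk, Ne.symm hjl, Ne.symm hkl]
  ring

set_option maxHeartbeats 1000000 in
lemma det_case1_four (i j k l : Fin 4) (hij : i ≠ j) (hik : i ≠ k)
    (hil : i ≠ l) (hjk : j ≠ k) (hjl : j ≠ l) (hkl : k ≠ l) (γ x y : ℝ) :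
    (gramTwoVar i j k l γ x y).det =
      (1 - x^2) * (1 - y^2) - 4*γ^2*(1-x)*(1-y) := by
  have hinj : Function.Injective ![i, j, k, l] := by
    intro a b hab
    fin_cases a <;> fin_cases b <;> simp_all <;>
      first
        | rfl
        | (exfalso; first
            | exact hij hab | exact hik hab | exact hil hab
            | exact hjk hab | exact hjl hab | exact hkl hab
            | exact hij hab.symm | exact hik hab.symm | exact hil hab.symm
            | exact hjk hab.symm | exact hjl hab.symm | exact hkl hab.symm)
  let e : Fin 4 ≃ Fin 4 := Equiv.ofBijective _ (Finite.injective_iff_bijective.mp hinj)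
  rw [← Matrix.det_submatrix_equiv_self e]
  have hsub : (gramTwoVar i j k l γ x y).submatrix e e =
      !![1, x, γ, γ; x, 1, γ, γ; γ, γ, 1, y; γ, γ, y, 1] := by
    ext a b
    have he : ∀ a, e a = ![i, j, k, l] a := fun a => rfl
    fin_cases a <;> fin_cases b <;>
      simp [Matrix.submatrix_apply, he, gramTwoVar, hij, hik, hil, hjk, hjl, hkl,
        Ne.symm hij, Ne.symm hik, Ne.symm hil, Ne.symm hjk, Ne.symm hjl, Ne.symm hkl,
        Matrix.vecHead, Matrix.vecTail]
  rw [hsub, det_fin_four_of]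
  ring

/-- Second partial derivatives of the determinant of the symmetric matrix with unit
diagonal and off-diagonal variables `γ_{jk}`, evaluated at the symmetric point
`γ_{jk} ≡ γ`:
`∂²det/∂γ_{ij}∂γ_{kl} = 0` for `i,j,k,l` distinct,
`∂²det/∂γ_{ij}∂γ_{jk} = 2γ(1−γ)^{N−3}` for `i,j,k` distinct, and
`∂²det/∂γ_{ij}² = −2(1+(N−3)γ)(1−γ)^{N−3}`. -/
theorem second_derivs_gram_det (N : ℕ) (hN : 3 ≤ N) (γ : ℝ) :
    (∀ i j k l : Fin N, i ≠ j → i ≠ k → i ≠ l → j ≠ k → j ≠ l → k ≠ l →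
      deriv (fun x : ℝ =>
        deriv (fun y : ℝ => (gramTwoVar i j k l γ x y).det) γ) γ = 0) ∧
    (∀ i j k : Fin N, i ≠ j → j ≠ k → i ≠ k →
      deriv (fun x : ℝ =>
        deriv (fun y : ℝ => (gramTwoVar i j j k γ x y).det) γ) γ =
        2 * γ * (1 - γ) ^ (N - 3)) ∧
    (∀ i j : Fin N, i ≠ j →
      deriv (deriv (fun x : ℝ =>
        (Matrix.of fun a b : Fin N =>
          if a = b then (1 : ℝ)
          else if (a = i ∧ b = j) ∨ (a = j ∧ b = i) then x
          else γ).det)) γ =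
        -2 * (1 + ((N : ℝ) - 3) * γ) * (1 - γ) ^ (N - 3)) := by
  refine ⟨?_, ?_, ?_⟩
  · intro i j k l hij hik hil hjk hjl hkl
    have h4 : 4 ≤ N := by
      have hcard : ({i, j, k, l} : Finset (Fin N)).card = 4 := by
        rw [Finset.card_insert_of_notMem (by simp [hij, hik, hil]),
          Finset.card_insert_of_notMem (by simp [hjk, hjl]),
          Finset.card_insert_of_notMem (by simp [hkl]), Finset.card_singleton]
      have hle := Finset.card_le_univ ({i, j, k, l} : Finset (Fin N))
      rw [Fintype.card_fin, hcard] at hle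
      exact hle
    rcases eq_or_lt_of_le h4 with h | h
    · -- N = 4
      subst h
      have hstep : (fun x : ℝ => deriv (fun y : ℝ => (gramTwoVar i j k l γ x y).det) γ)
          = fun x : ℝ => -2 * γ * (1 - x ^ 2) + 4 * γ ^ 2 * (1 - x) := by
        funext x
        have hfy : (fun y : ℝ => (gramTwoVar i j k l γ x y).det) = fun y : ℝ =>
            (1 - x^2) * (1 - y^2) - 4*γ^2*(1-x)*(1-y) :=
          funext fun y => det_case1_four i j k l hij hik hil hjk hjl hkl γ x y
        rw [hfy]
        have hy : HasDerivAt (fun y : ℝ => y) 1 γ := hasDerivAt_id γ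
        have h : HasDerivAt (fun y : ℝ => (1 - x^2) * (1 - y^2) - 4*γ^2*(1-x)*(1-y))
            (-2 * γ * (1 - x ^ 2) + 4 * γ ^ 2 * (1 - x)) γ := by
          refine HasDerivAt.congr_deriv (((((hy.pow 2).const_sub 1).const_mul (1 - x^2)).sub
            ((hy.const_sub 1).const_mul (4*γ^2*(1-x))))) ?_
          push_cast; ring
        exact h.deriv
      rw [hstep]
      have hx : HasDerivAt (fun x : ℝ => x) 1 γ := hasDerivAt_id γ
      have h2 : HasDerivAt (fun x : ℝ => -2 * γ * (1 - x ^ 2) + 4 * γ ^ 2 * (1 - x))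
          (0 : ℝ) γ := by
        refine HasDerivAt.congr_deriv ((((hx.pow 2).const_sub 1).const_mul (-2 * γ)).add
          ((hx.const_sub 1).const_mul (4 * γ ^ 2))) ?_
        push_cast; ring
      exact h2.deriv
    · -- 5 ≤ N
      have h5 : 5 ≤ N := h
      have hstep : (fun x : ℝ => deriv (fun y : ℝ => (gramTwoVar i j k l γ x y).det) γ)
          = fun x : ℝ => (1-γ)^(N-5) * (-2*(1-γ)^3*γ + 2*(1-γ)*γ*(x-γ)^2) := by
        funext x
        have hfy : (fun y : ℝ => (gramTwoVar i j k l γ x y).det) = fun y : ℝ =>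
            (1-γ)^(N-5) * ((1-γ)^5 + (1-γ)^4*γ*N - 2*(1-γ)^3*γ*((x-γ)+(y-γ))
              - ((1-γ)^3 + (1-γ)^2*γ*N - 2*(1-γ)^2*γ)*((x-γ)^2+(y-γ)^2)
              + 2*(1-γ)*γ*((x-γ)*(y-γ)^2 + (x-γ)^2*(y-γ))
              + ((1-γ) + γ*N - 4*γ)*(x-γ)^2*(y-γ)^2) :=
          funext fun y => det_case1 h5 i j k l hij hik hil hjk hjl hkl γ x y
        rw [hfy]
        have hy : HasDerivAt (fun y : ℝ => y - γ) 1 γ := (hasDerivAt_id γ).sub_const γ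
        have h : HasDerivAt (fun y : ℝ =>
            (1-γ)^(N-5) * ((1-γ)^5 + (1-γ)^4*γ*N - 2*(1-γ)^3*γ*((x-γ)+(y-γ))
              - ((1-γ)^3 + (1-γ)^2*γ*N - 2*(1-γ)^2*γ)*((x-γ)^2+(y-γ)^2)
              + 2*(1-γ)*γ*((x-γ)*(y-γ)^2 + (x-γ)^2*(y-γ))
              + ((1-γ) + γ*N - 4*γ)*(x-γ)^2*(y-γ)^2))
            ((1-γ)^(N-5) * (-2*(1-γ)^3*γ + 2*(1-γ)*γ*(x-γ)^2)) γ := by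
          refine HasDerivAt.congr_deriv ((((((hasDerivAt_const γ ((1-γ)^5 + (1-γ)^4*γ*(N:ℝ))).sub
            ((hy.const_add (x-γ)).const_mul (2*(1-γ)^3*γ))).sub
            (((hy.pow 2).const_add ((x-γ)^2)).const_mul ((1-γ)^3 + (1-γ)^2*γ*N - 2*(1-γ)^2*γ))).add
            ((((hy.pow 2).const_mul (x-γ)).add (hy.const_mul ((x-γ)^2))).const_mul (2*(1-γ)*γ))).add
            ((hy.pow 2).const_mul (((1-γ) + γ*N - 4*γ)*(x-γ)^2))).const_mul
            ((1-γ)^(N-5))) ?_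
          push_cast; ring
        exact h.deriv
      rw [hstep]
      have hy : HasDerivAt (fun x : ℝ => x - γ) 1 γ := (hasDerivAt_id γ).sub_const γ
      have h2 : HasDerivAt (fun x : ℝ =>
          (1-γ)^(N-5) * (-2*(1-γ)^3*γ + 2*(1-γ)*γ*(x-γ)^2)) (0 : ℝ) γ := by
        refine HasDerivAt.congr_deriv ((((hy.pow 2).const_mul (2*(1-γ)*γ)).const_add (-2*(1-γ)^3*γ)).const_mul
          ((1-γ)^(N-5))) ?_
        push_cast; ring
      exact h2.deriv
  · intro i j k hij hjk hik
    have hstep : (fun x : ℝ => deriv (fun y : ℝ => (gramTwoVar i j j k γ x y).det) γ)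
        = fun x : ℝ => (1 - γ) ^ (N - 3) * ((-2 * γ * (1 - γ)) + 2 * γ * (x - γ)) := by
      funext x
      have hfy : (fun y : ℝ => (gramTwoVar i j j k γ x y).det) = fun y : ℝ =>
          (1 - γ) ^ (N - 3) * (((1 - γ) + γ * N) * (1 - γ) ^ 2
            + (-2 * γ * (1 - γ)) * ((x - γ) + (y - γ))
            + (γ - (1 - γ) - γ * N) * ((x - γ) ^ 2 + (y - γ) ^ 2)
            + γ * ((x - γ) + (y - γ)) ^ 2) :=
        funext fun y => det_case2 hN i j k hij hjk hik γ x y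
      rw [hfy]
      have hy : HasDerivAt (fun y : ℝ => y - γ) 1 γ := (hasDerivAt_id γ).sub_const γ
      have h : HasDerivAt (fun y : ℝ =>
          (1 - γ) ^ (N - 3) * (((1 - γ) + γ * N) * (1 - γ) ^ 2
            + (-2 * γ * (1 - γ)) * ((x - γ) + (y - γ))
            + (γ - (1 - γ) - γ * N) * ((x - γ) ^ 2 + (y - γ) ^ 2)
            + γ * ((x - γ) + (y - γ)) ^ 2))
          ((1 - γ) ^ (N - 3) * ((-2 * γ * (1 - γ)) + 2 * γ * (x - γ))) γ := by
        refine HasDerivAt.congr_deriv (((((hasDerivAt_const γ (((1 - γ) + γ * N) * (1 - γ) ^ 2)).add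
          ((hy.const_add (x - γ)).const_mul (-2 * γ * (1 - γ)))).add
          (((hy.pow 2).const_add ((x - γ) ^ 2)).const_mul (γ - (1 - γ) - γ * N))).add
          (((hy.const_add (x - γ)).pow 2).const_mul γ)).const_mul
          ((1 - γ) ^ (N - 3))) ?_
        push_cast; ring
      exact h.deriv
    rw [hstep]
    have hy : HasDerivAt (fun x : ℝ => x - γ) 1 γ := (hasDerivAt_id γ).sub_const γ
    have h2 : HasDerivAt (fun x : ℝ =>
        (1 - γ) ^ (N - 3) * ((-2 * γ * (1 - γ)) + 2 * γ * (x - γ)))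
        (2 * γ * (1 - γ) ^ (N - 3)) γ := by
      refine HasDerivAt.congr_deriv (((hy.const_mul (2 * γ)).const_add (-2 * γ * (1 - γ))).const_mul
        ((1 - γ) ^ (N - 3))) ?_
      ring
    exact h2.deriv
  · intro i j hij
    have hF : (fun x : ℝ =>
        (Matrix.of fun a b : Fin N =>
          if a = b then (1 : ℝ)
          else if (a = i ∧ b = j) ∨ (a = j ∧ b = i) then x
          else γ).det) = fun x : ℝ =>
        (1 - γ) ^ (N - 3) * (((1 - γ) + γ * N) * (1 - γ) ^ 2
          + (-2 * γ * (1 - γ)) * (x - γ)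
          + (2 * γ - (1 - γ) - γ * N) * (x - γ) ^ 2) :=
      funext fun x => det_case3 hN i j hij γ x
    rw [hF]
    have hd : deriv (fun x : ℝ =>
        (1 - γ) ^ (N - 3) * (((1 - γ) + γ * N) * (1 - γ) ^ 2
          + (-2 * γ * (1 - γ)) * (x - γ)
          + (2 * γ - (1 - γ) - γ * N) * (x - γ) ^ 2)) = fun x : ℝ =>
        (1 - γ) ^ (N - 3) * ((-2 * γ * (1 - γ))
          + 2 * (2 * γ - (1 - γ) - γ * N) * (x - γ)) := by
      funext x
      have hy : HasDerivAt (fun x : ℝ => x - γ) 1 x := (hasDerivAt_id x).sub_const γ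
      have h : HasDerivAt (fun x : ℝ =>
          (1 - γ) ^ (N - 3) * (((1 - γ) + γ * N) * (1 - γ) ^ 2
            + (-2 * γ * (1 - γ)) * (x - γ)
            + (2 * γ - (1 - γ) - γ * N) * (x - γ) ^ 2))
          ((1 - γ) ^ (N - 3) * ((-2 * γ * (1 - γ))
            + 2 * (2 * γ - (1 - γ) - γ * N) * (x - γ))) x := by
        refine HasDerivAt.congr_deriv ((((hasDerivAt_const x (((1 - γ) + γ * N) * (1 - γ) ^ 2)).add
          (hy.const_mul (-2 * γ * (1 - γ)))).add
          ((hy.pow 2).const_mul (2 * γ - (1 - γ) - γ * N))).const_mul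
          ((1 - γ) ^ (N - 3))) ?_
        push_cast; ring
      exact h.deriv
    rw [hd]
    have hy : HasDerivAt (fun x : ℝ => x - γ) 1 γ := (hasDerivAt_id γ).sub_const γ
    have h2 : HasDerivAt (fun x : ℝ =>
        (1 - γ) ^ (N - 3) * ((-2 * γ * (1 - γ))
          + 2 * (2 * γ - (1 - γ) - γ * N) * (x - γ)))
        (-2 * (1 + ((N : ℝ) - 3) * γ) * (1 - γ) ^ (N - 3)) γ := by
      refine HasDerivAt.congr_deriv (((hy.const_mul (2 * (2 * γ - (1 - γ) - γ * N))).const_add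
        (-2 * γ * (1 - γ))).const_mul ((1 - γ) ^ (N - 3))) ?_
      push_cast; ring
    exact h2.deriv
end

section
/- For the symmetric Gaussian wave function factor f(r₁,…,r_N,{γ_{jk}}) = Γ_G^{(D−N−1)/4} ∏_j r_j^{(D−1)/2} exp(−(D/2)R̄² − (λD/2)Σᵢρ̄ᵢ²) of the harmonic model (expressed in hyperradii r_j and angle cosines γ_{jk}), the stationarity conditions ∂f/∂r̄ᵢ = 0 and ∂f/∂γ_{jk} = 0 as D → ∞ at the symmetric configuration r̄ᵢ = r̄_∞, γ_{jk} = γ_∞ are solved by γ_∞ = (λ−1)/(N+λ−1) and r̄_∞² = (N+λ−1)/(2λN). -/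
/-!
With `s = N + λ - 1`, the symmetric cosine `γ = (λ - 1)/s` makes both Gram factors simple:
`1 - γ = N/s` and `1 + (N - 1)γ = Nλ/s`. The radial bracket then collapses to `N²λ/s`, so the
radial equation says exactly `2λN r² = s`, and with this value of `r²` both sides of the angular
equation equal `(λ - 1)s/(2λN²)`.
-/

section SymmetricStationarity

variable {n lam : ℝ}

lemma one_sub_symmetric_cosine (hs : n + lam - 1 ≠ 0) :
    1 - (lam - 1) / (n + lam - 1) = n / (n + lam - 1) := by
  field_simp
  ring

lemma one_add_mul_symmetric_cosine (hs : n + lam - 1 ≠ 0) :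
    1 + (n - 1) * ((lam - 1) / (n + lam - 1)) = n * lam / (n + lam - 1) := by
  field_simp
  ring

lemma radial_stationarity {r : ℝ} (hn : n ≠ 0) (hlam : lam ≠ 0) (hs : n + lam - 1 ≠ 0)
    (hr : r ≠ 0) (hr2 : r ^ 2 = (n + lam - 1) / (2 * lam * n)) :
    1 / (2 * r) = (r / n) * ((1 + (n - 1) * ((lam - 1) / (n + lam - 1))) +
      lam * (n - 1) * (1 - (lam - 1) / (n + lam - 1))) := by
  have hsq : 2 * lam * n * r ^ 2 = n + lam - 1 := by
    rw [hr2]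
    field_simp
  rw [one_add_mul_symmetric_cosine hs, one_sub_symmetric_cosine hs]
  field_simp
  linear_combination -hsq

lemma angular_stationarity {r : ℝ} (hn : n ≠ 0) (hs : n + lam - 1 ≠ 0)
    (hr2 : r ^ 2 = (n + lam - 1) / (2 * lam * n)) :
    -((lam - 1) / (n + lam - 1) / (2 * (1 - (lam - 1) / (n + lam - 1)) *
      (1 + (n - 1) * ((lam - 1) / (n + lam - 1))))) + (lam - 1) * r ^ 2 / n = 0 := by
  rw [one_sub_symmetric_cosine hs, one_add_mul_symmetric_cosine hs, hr2]
  field_simp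
  ring

end SymmetricStationarity

/-- The leading-order (large-`D`) stationarity conditions for the symmetric Gaussian
wave-function factor of the harmonic model at the symmetric configuration
`r̄ᵢ = r̄_∞`, `γ_{jk} = γ_∞`.  Using the symmetric-point values
`Γ_G = (1+(N−1)γ)(1−γ)^{N−1}`, `∂Γ_G/∂γ_{jk} = −2γ(1−γ)^{N−2}`,
`∂R̄²/∂r̄ᵢ = 2r̄_∞(1+(N−1)γ_∞)/N`, `∂R̄²/∂γ_{jk} = 2r̄_∞²/N`,
`∂(Σρ̄²)/∂r̄ᵢ = 2(N−1)r̄_∞(1−γ_∞)/N` and `∂(Σρ̄²)/∂γ_{jk} = −2r̄_∞²/N`, the equations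
`∂f/∂r̄ᵢ = 0` and `∂f/∂γ_{jk} = 0` reduce at leading order in `D` to the radial
equation `1/(2r̄_∞) = (r̄_∞/N)·((1+(N−1)γ_∞) + λ(N−1)(1−γ_∞))` and the angular
equation `−γ_∞/(2(1−γ_∞)(1+(N−1)γ_∞)) + (λ−1)r̄_∞²/N = 0`.  These are solved by
`γ_∞ = (λ−1)/(N+λ−1)` and `r̄_∞² = (N+λ−1)/(2λN)`. -/
theorem stationarity_solved_by_symmetric_configuration (N : ℕ) (hN : 2 ≤ N)
    (lam : ℝ) (hlam : 0 < lam) (γinf rinf : ℝ)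
    (hγ : γinf = (lam - 1) / ((N : ℝ) + lam - 1))
    (hr : rinf = Real.sqrt (((N : ℝ) + lam - 1) / (2 * lam * N))) :
    1 / (2 * rinf) =
      (rinf / N) * ((1 + ((N : ℝ) - 1) * γinf) + lam * ((N : ℝ) - 1) * (1 - γinf)) ∧
    -(γinf / (2 * (1 - γinf) * (1 + ((N : ℝ) - 1) * γinf))) +
      (lam - 1) * rinf ^ 2 / N = 0 := by
  have hN2 : (2 : ℝ) ≤ N := by exact_mod_cast hN
  have hs : 0 < (N : ℝ) + lam - 1 := by linarith
  have hquot : 0 < ((N : ℝ) + lam - 1) / (2 * lam * N) := by positivity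
  have hrpos : 0 < rinf := hr ▸ Real.sqrt_pos.mpr hquot
  have hr2 : rinf ^ 2 = ((N : ℝ) + lam - 1) / (2 * lam * N) := hr ▸ Real.sq_sqrt hquot.le
  subst hγ
  exact ⟨radial_stationarity (by positivity) hlam.ne' hs.ne' hrpos.ne' hr2,
    angular_stationarity (by positivity) hs.ne' hr2⟩
end
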